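/- arXiv:math/0406250 — 2 statements merged into one kernel-verified Lean document; each statement's English description precedes it below -/
import Mathlib

section
/- Let Π be an outside decomposition of an edgewise connected skew diagram λ/μ, with cutting strip φ(Π). Then every strip θ of Π is equal, up to a translation of the form (i,j) ↦ (i+t, j+t) along diagonals (so that the content of each box is preserved), to the segment φ[p(θ), q(θ)] of the cutting strip, where p(θ) and q(θ) are the contents of the starting and ending boxes of θ in λ/μ. -/
noncomputable section

/-- A box in the plane: `(row, column)`, rows increasing downward (English notation). -/
abbrev Box : Type := ℤ × ℤ

/-- The content of a box `(i, j)` is `j - i`. -/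
def boxContent (b : Box) : ℤ := b.2 - b.1

/-- An integer partition, indexed from `1` (the value `part 0` is irrelevant). -/
structure Partition' where
  part : ℕ → ℕ
  antitone : ∀ ⦃i j : ℕ⦄, i ≤ j → part j ≤ part i
  eventually_zero : ∃ N : ℕ, ∀ i : ℕ, N ≤ i → part i = 0

/-- The skew diagram `λ/μ`: boxes `(i, j)` with `i ≥ 1` and `μ_i < j ≤ λ_i`. -/
def skewCells (lam mu : Partition') : Set Box :=
  {b : Box | 1 ≤ b.1 ∧ (mu.part b.1.toNat : ℤ) < b.2 ∧ b.2 ≤ (lam.part b.1.toNat : ℤ)}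

/-- `D` is the set of boxes of a skew diagram `λ/μ` for some partitions `μ ⊆ λ`. -/
def IsSkewShape (D : Set Box) : Prop :=
  ∃ lam mu : Partition', (∀ i, mu.part i ≤ lam.part i) ∧ D = skewCells lam mu

/-- Translate a set of boxes by a vector `v`. -/
def boxTranslate (v : Box) (D : Set Box) : Set Box := (fun b => b + v) '' D

/-- `D` is a translate of a skew diagram. -/
def IsSkewLike (D : Set Box) : Prop := ∃ v : Box, IsSkewShape (boxTranslate v D)

/-- Two boxes share a common edge. -/
def boxAdj (a b : Box) : Prop :=
  (a.1 = b.1 ∧ (a.2 = b.2 + 1 ∨ b.2 = a.2 + 1)) ∨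
  (a.2 = b.2 ∧ (a.1 = b.1 + 1 ∨ b.1 = a.1 + 1))

/-- Any two boxes of `D` are joined by a path of boxes of `D` in which consecutive
boxes share a common edge. -/
def EdgewiseConnected (D : Set Box) : Prop :=
  ∀ a ∈ D, ∀ b ∈ D, Relation.ReflTransGen (fun x y => x ∈ D ∧ y ∈ D ∧ boxAdj x y) a b

/-- `D` contains no `2 × 2` block of boxes. -/
def NoTwoByTwo (D : Set Box) : Prop :=
  ∀ b : Box, ¬(b ∈ D ∧ (b.1, b.2 + 1) ∈ D ∧ (b.1 + 1, b.2) ∈ D ∧ (b.1 + 1, b.2 + 1) ∈ D)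

/-- A border strip (ribbon): a nonempty edgewise connected skew diagram (up to translation)
containing no `2 × 2` block of boxes. -/
def IsBorderStrip (B : Set Box) : Prop :=
  B.Nonempty ∧ IsSkewLike B ∧ EdgewiseConnected B ∧ NoTwoByTwo B

/-- `b` is the starting box (lower-left end) of `B`: no box of `B` directly to its left
nor directly below it. -/
def IsStartBox (B : Set Box) (b : Box) : Prop :=
  b ∈ B ∧ (b.1, b.2 - 1) ∉ B ∧ (b.1 + 1, b.2) ∉ B

/-- `b` is the ending box (upper-right end) of `B`: no box of `B` directly above it
nor directly to its right. -/
def IsEndBox (B : Set Box) (b : Box) : Prop :=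
  b ∈ B ∧ (b.1 - 1, b.2) ∉ B ∧ (b.1, b.2 + 1) ∉ B

/-- The strip `B` has starting box of content `p` and ending box of content `q`. -/
def HasPQ (B : Set Box) (p q : ℤ) : Prop :=
  (∃ b : Box, IsStartBox B b ∧ boxContent b = p) ∧
  (∃ b : Box, IsEndBox B b ∧ boxContent b = q)

/-- An outside decomposition of `D`: a partition of the boxes of `D` into pairwise disjoint
border strips, each strip having its starting box on the left or bottom perimeter of `D` and
its ending box on the right or top perimeter of `D`. -/
def IsOutsideDecomposition (D : Set Box) (P : Set (Set Box)) : Prop :=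
  (∀ θ ∈ P, IsBorderStrip θ ∧ θ ⊆ D) ∧
  (∀ b ∈ D, ∃! θ : Set Box, θ ∈ P ∧ b ∈ θ) ∧
  (∀ θ ∈ P, ∀ b : Box, IsStartBox θ b → ((b.1, b.2 - 1) ∉ D ∨ (b.1 + 1, b.2) ∉ D)) ∧
  (∀ θ ∈ P, ∀ b : Box, IsEndBox θ b → ((b.1 - 1, b.2) ∉ D ∨ (b.1, b.2 + 1) ∉ D))

/-- The box `b` of `D` goes up in the outside decomposition `P`: in the strip of `P`
containing it, the next box is directly above it; an ending box goes up when no box of `D`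
lies directly above it. -/
def GoesUp (D : Set Box) (P : Set (Set Box)) (b : Box) : Prop :=
  ∃ θ ∈ P, b ∈ θ ∧ ((b.1 - 1, b.2) ∈ θ ∨ (IsEndBox θ b ∧ (b.1 - 1, b.2) ∉ D))

/-- The box `b` of `D` goes right in the outside decomposition `P`: in the strip of `P`
containing it, the next box is directly to its right; an ending box goes right when some box
of `D` lies directly above it. -/
def GoesRight (D : Set Box) (P : Set (Set Box)) (b : Box) : Prop :=
  ∃ θ ∈ P, b ∈ θ ∧ ((b.1, b.2 + 1) ∈ θ ∨ (IsEndBox θ b ∧ (b.1 - 1, b.2) ∈ D))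

/-- `T` is a cutting strip of the outside decomposition `P` of `D`: a border strip whose
boxes are labeled by the contents of `D` (each content appearing once), in which the box
labeled `c` goes up or goes right according as the boxes of the diagonal of content `c`
of `D` go up or go right in `P`. -/
def IsCuttingStripOf (D : Set Box) (P : Set (Set Box)) (T : Set Box) : Prop :=
  IsBorderStrip T ∧ boxContent '' T = boxContent '' D ∧
  ∀ b ∈ T, ∀ c ∈ D, boxContent c = boxContent b →
    (((b.1 - 1, b.2) ∈ T → GoesUp D P c) ∧ ((b.1, b.2 + 1) ∈ T → GoesRight D P c))

/-- The segment `φ[p, q]` of a strip `T`: its boxes of content between `p` and `q`. -/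
def stripSegment (T : Set Box) (p q : ℤ) : Set Box :=
  {b ∈ T | p ≤ boxContent b ∧ boxContent b ≤ q}

/-- The box of content `c` of the strip `T` goes up (the next box is directly above it). -/
def StripGoesUpAt (T : Set Box) (c : ℤ) : Prop :=
  ∃ b ∈ T, boxContent b = c ∧ (b.1 - 1, b.2) ∈ T

/-- The box of content `c` of the strip `T` goes right (the next box is directly right of it). -/
def StripGoesRightAt (T : Set Box) (c : ℤ) : Prop :=
  ∃ b ∈ T, boxContent b = c ∧ (b.1, b.2 + 1) ∈ T

/-- `T'` is obtained from the strip `T` by reversing the direction (up versus right) of the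
box labeled `i`, keeping the directions of all other boxes. -/
def IsTwist (i : ℤ) (T T' : Set Box) : Prop :=
  boxContent '' T' = boxContent '' T ∧
  (∀ c : ℤ, c ≠ i → (StripGoesUpAt T c ↔ StripGoesUpAt T' c)) ∧
  (StripGoesUpAt T i ↔ StripGoesRightAt T' i)

/-- The inversion number of an outside decomposition: the number of ordered pairs of
strips `(θ₁, θ₂)` with `p(θ₁) > p(θ₂)` and `q(θ₁) < q(θ₂)`. -/
def invOD (P : Set (Set Box)) : ℕ :=
  {θθ : Set Box × Set Box | θθ.1 ∈ P ∧ θθ.2 ∈ P ∧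
    ∃ p₁ q₁ p₂ q₂ : ℤ, HasPQ θθ.1 p₁ q₁ ∧ HasPQ θθ.2 p₂ q₂ ∧ p₂ < p₁ ∧ q₁ < q₂}.ncard

/-- A semistandard Young tableau of shape `D`: entries (variable indices) weakly increase
along rows and strictly increase down columns; entries outside `D` are normalized to `0`. -/
def IsSSYT (D : Set Box) (T : Box → ℕ) : Prop :=
  (∀ b ∈ D, (b.1, b.2 + 1) ∈ D → T b ≤ T (b.1, b.2 + 1)) ∧
  (∀ b ∈ D, (b.1 + 1, b.2) ∈ D → T b < T (b.1 + 1, b.2)) ∧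
  (∀ b : Box, b ∉ D → T b = 0)

/-- The skew Schur function of a skew diagram `D`, as a formal power series in the
variables `x_n` (`n : ℕ`): the coefficient of a monomial `μ` is the number of semistandard
Young tableaux of shape `D` using each variable `n` exactly `μ n` times. -/
def schur (D : Set Box) : MvPowerSeries ℕ ℤ :=
  fun μ => ({T : Box → ℕ | IsSSYT D T ∧ ∀ n : ℕ, μ n = {b ∈ D | T b = n}.ncard}.ncard : ℤ)

/-- `b` is the upper-right corner box of `D`: the rightmost box of the top row. -/
def IsUpperRightCorner (D : Set Box) (b : Box) : Prop :=
  b ∈ D ∧ (∀ c ∈ D, b.1 ≤ c.1) ∧ ∀ c ∈ D, c.1 = b.1 → c.2 ≤ b.2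

/-- `b` is the lower-left corner box of `D`: the leftmost box of the bottom row. -/
def IsLowerLeftCorner (D : Set Box) (b : Box) : Prop :=
  b ∈ D ∧ (∀ c ∈ D, c.1 ≤ b.1) ∧ ∀ c ∈ D, c.1 = b.1 → b.2 ≤ c.2

/-- The block (edgewise connected component) of `D` containing the box `a`. -/
def blockOf (D : Set Box) (a : Box) : Set Box :=
  {b : Box | Relation.ReflTransGen (fun x y => x ∈ D ∧ y ∈ D ∧ boxAdj x y) a b}

/-- The complete homogeneous symmetric function `h_r` (`h_0 = 1`, `h_r = 0` for `r < 0`):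
the sum of all monomials of degree `r`. -/
def hSym (r : ℤ) : MvPowerSeries ℕ ℤ :=
  fun μ => if ((μ.sum fun _ e => e : ℕ) : ℤ) = r then 1 else 0

/-- The elementary symmetric function `e_r` (`e_0 = 1`, `e_r = 0` for `r < 0`):
the sum of all squarefree monomials of degree `r`. -/
def eSym (r : ℤ) : MvPowerSeries ℕ ℤ :=
  fun μ => if (∀ n ∈ μ.support, μ n = 1) ∧ ((μ.sum fun _ e => e : ℕ) : ℤ) = r then 1 else 0

/-- The `j`-th part (`j ≥ 1`) of the conjugate partition: the number of indices `i ≥ 1`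
with `λ_i ≥ j`. -/
def conjPart (lam : Partition') (j : ℕ) : ℕ := {i : ℕ | 1 ≤ i ∧ j ≤ lam.part i}.ncard

/-- The order on the supersymmetric alphabet `x_0 < x_1 < ⋯ < y_0 < y_1 < ⋯`,
with `Sum.inl n` representing `x_n` and `Sum.inr n` representing `y_n`. -/
def entryLE : ℕ ⊕ ℕ → ℕ ⊕ ℕ → Prop
  | Sum.inl a, Sum.inl b => a ≤ b
  | Sum.inl _, Sum.inr _ => True
  | Sum.inr _, Sum.inl _ => False
  | Sum.inr a, Sum.inr b => a ≤ b

/-- A super tableau of shape `D`: rows and columns weakly increase, the `x`-symbols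
strictly increase down columns, the `y`-symbols strictly increase along rows; entries
outside `D` are normalized to `Sum.inl 0`. -/
def IsSuperSSYT (D : Set Box) (T : Box → ℕ ⊕ ℕ) : Prop :=
  (∀ b ∈ D, (b.1, b.2 + 1) ∈ D → entryLE (T b) (T (b.1, b.2 + 1))) ∧
  (∀ b ∈ D, (b.1 + 1, b.2) ∈ D → entryLE (T b) (T (b.1 + 1, b.2))) ∧
  (∀ b ∈ D, (b.1 + 1, b.2) ∈ D →
    ∀ a c : ℕ, T b = Sum.inl a → T (b.1 + 1, b.2) = Sum.inl c → a < c) ∧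
  (∀ b ∈ D, (b.1, b.2 + 1) ∈ D →
    ∀ a c : ℕ, T b = Sum.inr a → T (b.1, b.2 + 1) = Sum.inr c → a < c) ∧
  (∀ b : Box, b ∉ D → T b = Sum.inl 0)

/-- The supersymmetric skew Schur function `s_D(X, Y)`, as a formal power series in the
variables `x_n, y_n`: the coefficient of a monomial `μ` is the number of super tableaux
of shape `D` using each symbol `v` exactly `μ v` times. -/
def superSchur (D : Set Box) : MvPowerSeries (ℕ ⊕ ℕ) ℤ :=
  fun μ =>
    ({T : Box → ℕ ⊕ ℕ | IsSuperSSYT D T ∧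
        ∀ v : ℕ ⊕ ℕ, μ v = {b ∈ D | T b = v}.ncard}.ncard : ℤ)

private lemma adj_content {x y : Box} (h : boxAdj x y) :
    boxContent y = boxContent x + 1 ∨ boxContent y = boxContent x - 1 := by
  obtain ⟨x1, x2⟩ := x; obtain ⟨y1, y2⟩ := y
  simp only [boxAdj, boxContent] at h ⊢
  omega

private lemma step_up_or_right {x y : Box} (h : boxAdj x y)
    (hc : boxContent y = boxContent x + 1) :
    y = (x.1 - 1, x.2) ∨ y = (x.1, x.2 + 1) := by
  obtain ⟨x1, x2⟩ := x; obtain ⟨y1, y2⟩ := y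
  simp only [boxAdj, boxContent, Prod.mk.injEq] at h hc ⊢
  omega

/-- Along a connected set, between contents there is an "up-right" step. -/
private lemma exists_step {B : Set Box} {a b : Box} {c : ℤ}
    (hpath : Relation.ReflTransGen (fun x y => x ∈ B ∧ y ∈ B ∧ boxAdj x y) a b)
    (h1 : boxContent a ≤ c) (h2 : c < boxContent b) :
    ∃ x, x ∈ B ∧ boxContent x = c ∧ ((x.1 - 1, x.2) ∈ B ∨ (x.1, x.2 + 1) ∈ B) := by
  revert h1
  induction hpath using Relation.ReflTransGen.head_induction_on with
  | refl => intro h1; omega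
  | @head u v hstep hpath ih =>
      intro h1
      obtain ⟨huB, hvB, hadj⟩ := hstep
      by_cases hv : boxContent v ≤ c
      · exact ih hv
      · push_neg at hv
        rcases adj_content hadj with hcv | hcv
        · have hxc : boxContent u = c := by omega
          rcases step_up_or_right hadj (by omega) with h | h
          · exact ⟨u, huB, hxc, Or.inl (h ▸ hvB)⟩
          · exact ⟨u, huB, hxc, Or.inr (h ▸ hvB)⟩
        · omega

private lemma mem_translate {B : Set Box} {v x : Box} :
    x + v ∈ boxTranslate v B ↔ x ∈ B := by
  constructor
  · rintro ⟨y, hy, hxy⟩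
    have : y = x := by
      obtain ⟨y1, y2⟩ := y; obtain ⟨x1, x2⟩ := x; obtain ⟨v1, v2⟩ := v
      simp only [Prod.ext_iff, Prod.fst_add, Prod.snd_add] at hxy ⊢
      constructor <;> omega
    exact this ▸ hy
  · intro hx
    exact ⟨x, hx, rfl⟩

private lemma content_inj_aux {lam mu : Partition'} {a b : Box}
    (ha : a ∈ skewCells lam mu) (hb : b ∈ skewCells lam mu)
    (h : boxContent a = boxContent b) (hlt : a.1 < b.1) :
    (a.1, a.2 + 1) ∈ skewCells lam mu ∧ (a.1 + 1, a.2) ∈ skewCells lam mu ∧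
      (a.1 + 1, a.2 + 1) ∈ skewCells lam mu := by
  obtain ⟨i, j⟩ := a
  obtain ⟨i', j'⟩ := b
  simp only [skewCells, Set.mem_setOf_eq] at ha hb ⊢
  obtain ⟨hi1, hmu, hlam⟩ := ha
  obtain ⟨hi1', hmu', hlam'⟩ := hb
  simp only [boxContent] at h hlt
  have hb2 : j + 1 ≤ j' := by omega
  have ht1 : i.toNat ≤ i'.toNat := Int.toNat_le_toNat (le_of_lt hlt)
  have ht2 : (i + 1).toNat ≤ i'.toNat := Int.toNat_le_toNat (by omega)
  have ht3 : i.toNat ≤ (i + 1).toNat := Int.toNat_le_toNat (by omega)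
  have hl1 : (lam.part i'.toNat : ℤ) ≤ (lam.part i.toNat : ℤ) :=
    Nat.cast_le.mpr (lam.antitone ht1)
  have hl2 : (lam.part i'.toNat : ℤ) ≤ (lam.part (i + 1).toNat : ℤ) :=
    Nat.cast_le.mpr (lam.antitone ht2)
  have hm1 : (mu.part (i + 1).toNat : ℤ) ≤ (mu.part i.toNat : ℤ) :=
    Nat.cast_le.mpr (mu.antitone ht3)
  refine ⟨⟨hi1, by omega, by omega⟩, ⟨by omega, by omega, by omega⟩,
    ⟨by omega, by omega, by omega⟩⟩

/-- In a skew-like set with no 2×2 block, content is injective. -/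
private lemma content_inj {B : Set Box} (hsk : IsSkewLike B) (h22 : NoTwoByTwo B)
    {a b : Box} (ha : a ∈ B) (hb : b ∈ B) (h : boxContent a = boxContent b) : a = b := by
  obtain ⟨v, lam, mu, _, hEq⟩ := hsk
  have hmem : ∀ x : Box, x ∈ B ↔ x + v ∈ skewCells lam mu := by
    intro x; rw [← hEq]; exact mem_translate.symm
  have hc : ∀ x : Box, boxContent (x + v) = boxContent x + (v.2 - v.1) := by
    intro x; simp [boxContent]; ring
  have key : ∀ x y : Box, x ∈ B → y ∈ B → boxContent x = boxContent y →
      x.1 < y.1 → False := by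
    intro x y hx hy hxy hlt
    have hx' := (hmem x).mp hx
    have hy' := (hmem y).mp hy
    have hcc : boxContent (x + v) = boxContent (y + v) := by rw [hc, hc, hxy]
    have hlt' : (x + v).1 < (y + v).1 := by
      simp only [Prod.fst_add]; omega
    obtain ⟨m1, m2, m3⟩ := content_inj_aux hx' hy' hcc hlt'
    apply h22 x
    refine ⟨hx, ?_, ?_, ?_⟩
    · rw [hmem]
      have : ((x.1, x.2 + 1) : Box) + v = ((x + v).1, (x + v).2 + 1) := by
        simp [Prod.ext_iff]; ring
      rw [this]; exact m1
    · rw [hmem]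
      have : ((x.1 + 1, x.2) : Box) + v = ((x + v).1 + 1, (x + v).2) := by
        simp [Prod.ext_iff]; ring
      rw [this]; exact m2
    · rw [hmem]
      have : ((x.1 + 1, x.2 + 1) : Box) + v = ((x + v).1 + 1, (x + v).2 + 1) := by
        simp [Prod.ext_iff]; constructor <;> ring
      rw [this]; exact m3
  rcases lt_trichotomy a.1 b.1 with hlt | heq | hgt
  · exact absurd (key a b ha hb h hlt) (fun f => f)
  · obtain ⟨a1, a2⟩ := a; obtain ⟨b1, b2⟩ := b
    simp only [boxContent] at h
    simp only at heq
    simp only [Prod.mk.injEq]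
    omega
  · exact absurd (key b a hb ha h.symm hgt) (fun f => f)

/-- Every strip `θ` of an outside decomposition `P` of an edgewise connected
skew diagram equals, up to a content-preserving translation along diagonals, the segment
`φ[p(θ), q(θ)]` of the cutting strip. -/
theorem strip_eq_segment_of_cuttingStrip
    (D : Set Box) (hD : IsSkewShape D) (hne : D.Nonempty) (hconn : EdgewiseConnected D)
    (P : Set (Set Box)) (hP : IsOutsideDecomposition D P)
    (T : Set Box) (hT : IsCuttingStripOf D P T)
    (θ : Set Box) (hθ : θ ∈ P) (bs be : Box)
    (hbs : IsStartBox θ bs) (hbe : IsEndBox θ be) :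
    ∃ t : ℤ, θ = (fun b : Box => (b.1 + t, b.2 + t)) ''
      stripSegment T (boxContent bs) (boxContent be) := by
  obtain ⟨hstrips, huniq, _, _⟩ := hP
  obtain ⟨⟨hθne, hθsk, hθconn, hθ22⟩, hθD⟩ := hstrips θ hθ
  obtain ⟨⟨hTne, hTsk, hTconn, hT22⟩, hTcont, hTdir⟩ := hT
  set p := boxContent bs with hp
  set q := boxContent be with hq
  have hpbs : p = bs.2 - bs.1 := rfl
  have hqbe : q = be.2 - be.1 := rfl
  have injθ : ∀ x ∈ θ, ∀ y ∈ θ, boxContent x = boxContent y → x = y :=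
    fun x hx y hy h => content_inj hθsk hθ22 hx hy h
  have injT : ∀ x ∈ T, ∀ y ∈ T, boxContent x = boxContent y → x = y :=
    fun x hx y hy h => content_inj hTsk hT22 hx hy h
  -- lower bound for contents in θ
  have hlow : ∀ x ∈ θ, p ≤ boxContent x := by
    intro x hx
    by_contra hcon
    push_neg at hcon
    obtain ⟨z, hz, hzc, hnz⟩ :=
      exists_step (hθconn x hx bs hbs.1) (c := p - 1) (by omega) (by omega)
    rcases hnz with hn | hn
    · have heq : (z.1 - 1, z.2) = bs :=
        injθ _ hn _ hbs.1 (by simp only [boxContent] at hzc ⊢; omega)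
      have hzbs : z = (bs.1 + 1, bs.2) := by
        obtain ⟨z1, z2⟩ := z
        simp only [Prod.ext_iff] at heq ⊢
        omega
      exact hbs.2.2 (hzbs ▸ hz)
    · have heq : (z.1, z.2 + 1) = bs :=
        injθ _ hn _ hbs.1 (by simp only [boxContent] at hzc ⊢; omega)
      have hzbs : z = (bs.1, bs.2 - 1) := by
        obtain ⟨z1, z2⟩ := z
        simp only [Prod.ext_iff] at heq ⊢
        omega
      exact hbs.2.1 (hzbs ▸ hz)
  -- upper bound for contents in θ
  have hhigh : ∀ x ∈ θ, boxContent x ≤ q := by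
    intro x hx
    by_contra hcon
    push_neg at hcon
    obtain ⟨z, hz, hzc, hnz⟩ :=
      exists_step (hθconn be hbe.1 x hx) (c := q) (le_refl _) hcon
    have hzbe : z = be := injθ _ hz _ hbe.1 (by rw [hzc])
    rcases hnz with hn | hn
    · exact hbe.2.1 (hzbe ▸ hn)
    · exact hbe.2.2 (hzbe ▸ hn)
  have hpq : p ≤ q := hlow be hbe.1
  -- every box of θ of content < q has an up or right neighbour in θ
  have hstepθ : ∀ x ∈ θ, boxContent x < q →
      ((x.1 - 1, x.2) ∈ θ ∨ (x.1, x.2 + 1) ∈ θ) := by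
    intro x hx hlt
    obtain ⟨z, hz, hzc, hnz⟩ :=
      exists_step (hθconn x hx be hbe.1) (c := boxContent x) (le_refl _) hlt
    have : z = x := injθ _ hz _ hx (by rw [hzc])
    exact this ▸ hnz
  -- every content in [p,q] is attained in θ
  have hexθ : ∀ c : ℤ, p ≤ c → c ≤ q → ∃ x ∈ θ, boxContent x = c := by
    intro c h1 h2
    rcases eq_or_lt_of_le h2 with he | hlt
    · exact ⟨be, hbe.1, he ▸ rfl⟩
    · obtain ⟨z, hz, hzc, _⟩ :=
        exists_step (hθconn bs hbs.1 be hbe.1) (c := c) h1 hlt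
      exact ⟨z, hz, hzc⟩
  -- every content in [p,q] is attained in T
  have hexT : ∀ c : ℤ, p ≤ c → c ≤ q → ∃ y ∈ T, boxContent y = c := by
    intro c h1 h2
    obtain ⟨x, hx, hxc⟩ := hexθ c h1 h2
    have : c ∈ boxContent '' T := by
      rw [hTcont]
      exact ⟨x, hθD hx, hxc⟩
    obtain ⟨y, hy, hyc⟩ := this
    exact ⟨y, hy, hyc⟩
  -- every box of T of content < q has an up or right neighbour in T
  have hstepT : ∀ y ∈ T, boxContent y < q →
      ((y.1 - 1, y.2) ∈ T ∨ (y.1, y.2 + 1) ∈ T) := by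
    intro y hy hlt
    obtain ⟨w, hw, hwc⟩ := hexT q hpq (le_refl _)
    obtain ⟨z, hz, hzc, hnz⟩ :=
      exists_step (hTconn y hy w hw) (c := boxContent y) (le_refl _) (by omega)
    have : z = y := injT _ hz _ hy (by rw [hzc])
    exact this ▸ hnz
  -- direction transfer from T to θ
  have hdir : ∀ x ∈ θ, ∀ y ∈ T, boxContent x = boxContent y → boxContent x < q →
      (((y.1 - 1, y.2) ∈ T → (x.1 - 1, x.2) ∈ θ) ∧
       ((y.1, y.2 + 1) ∈ T → (x.1, x.2 + 1) ∈ θ)) := by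
    intro x hx y hy hceq hlt
    have hxD : x ∈ D := hθD hx
    obtain ⟨hup, hright⟩ := hTdir y hy x hxD hceq
    have hnotend : ¬ IsEndBox θ x := by
      intro hend
      rcases hstepθ x hx hlt with h | h
      · exact hend.2.1 h
      · exact hend.2.2 h
    constructor
    · intro hT1
      obtain ⟨θ', hθ', hxθ', hcase⟩ := hup hT1
      have hθ'θ : θ' = θ := (huniq x hxD).unique ⟨hθ', hxθ'⟩ ⟨hθ, hx⟩
      subst hθ'θ
      rcases hcase with h | ⟨hend, _⟩
      · exact h
      · exact absurd hend hnotend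
    · intro hT1
      obtain ⟨θ', hθ', hxθ', hcase⟩ := hright hT1
      have hθ'θ : θ' = θ := (huniq x hxD).unique ⟨hθ', hxθ'⟩ ⟨hθ, hx⟩
      subst hθ'θ
      rcases hcase with h | ⟨hend, _⟩
      · exact h
      · exact absurd hend hnotend
  -- choose the box of T of content p and set the translation
  obtain ⟨y0, hy0, hy0c⟩ := hexT p (le_refl _) hpq
  refine ⟨bs.1 - y0.1, ?_⟩
  set t := bs.1 - y0.1 with htdef
  have ht2 : bs.2 = y0.2 + t := by
    have h1 : bs.2 - bs.1 = p := rfl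
    have h2 : y0.2 - y0.1 = p := hy0c
    omega
  -- the key induction along contents
  have main : ∀ n : ℕ, ∀ x ∈ θ, ∀ y ∈ T, boxContent x = p + n → boxContent y = p + n →
      p + n ≤ q → x = (y.1 + t, y.2 + t) := by
    intro n
    induction n with
    | zero =>
        intro x hx y hy hxc hyc _
        simp only [Nat.cast_zero, add_zero] at hxc hyc
        have hxbs : x = bs := injθ _ hx _ hbs.1 (by rw [hxc])
        have hyy0 : y = y0 := injT _ hy _ hy0 (by rw [hyc, hy0c])
        subst hxbs; subst hyy0
        simp only [Prod.ext_iff]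
        omega
    | succ n ih =>
        intro x hx y hy hxc hyc hle
        have hcast : ((n + 1 : ℕ) : ℤ) = (n : ℤ) + 1 := by push_cast; ring
        obtain ⟨x', hx', hx'c⟩ := hexθ (p + n) (by omega) (by rw [hcast] at hle; omega)
        obtain ⟨y', hy', hy'c⟩ := hexT (p + n) (by omega) (by rw [hcast] at hle; omega)
        have hihres : x' = (y'.1 + t, y'.2 + t) :=
          ih x' hx' y' hy' hx'c hy'c (by rw [hcast] at hle; omega)
        have hy'lt : boxContent y' < q := by rw [hcast] at hle; omega
        have hx'lt : boxContent x' < q := by rw [hcast] at hle; omega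
        rcases hstepT y' hy' hy'lt with hupT | hrightT
        · -- T goes up at content p + n
          have hyeq : y = (y'.1 - 1, y'.2) := injT _ hy _ hupT (by
            simp only [boxContent] at hy'c hyc ⊢
            push_cast at hyc; omega)
          have hupθ : (x'.1 - 1, x'.2) ∈ θ :=
            (hdir x' hx' y' hy' (by rw [hx'c, hy'c]) hx'lt).1 hupT
          have hxeq : x = (x'.1 - 1, x'.2) := injθ _ hx _ hupθ (by
            simp only [boxContent] at hx'c hxc ⊢
            push_cast at hxc; omega)
          rw [hxeq, hihres, hyeq]
          simp only [Prod.ext_iff, and_true, true_and]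
          ring
        · -- T goes right at content p + n
          have hyeq : y = (y'.1, y'.2 + 1) := injT _ hy _ hrightT (by
            simp only [boxContent] at hy'c hyc ⊢
            push_cast at hyc; omega)
          have hrightθ : (x'.1, x'.2 + 1) ∈ θ :=
            (hdir x' hx' y' hy' (by rw [hx'c, hy'c]) hx'lt).2 hrightT
          have hxeq : x = (x'.1, x'.2 + 1) := injθ _ hx _ hrightθ (by
            simp only [boxContent] at hx'c hxc ⊢
            push_cast at hxc; omega)
          rw [hxeq, hihres, hyeq]
          simp only [Prod.ext_iff, and_true, true_and]
          ring
  -- conclude the set equality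
  ext x
  constructor
  · intro hx
    have h1 := hlow x hx
    have h2 := hhigh x hx
    obtain ⟨y, hy, hyc⟩ := hexT (boxContent x) h1 h2
    refine ⟨y, ⟨hy, by omega, by omega⟩, ?_⟩
    have hn : boxContent x = p + ((boxContent x - p).toNat : ℤ) := by omega
    exact (main (boxContent x - p).toNat x hx y hy hn (by omega) (by omega)).symm
  · rintro ⟨y, ⟨hy, hy1, hy2⟩, rfl⟩
    obtain ⟨x, hx, hxc⟩ := hexθ (boxContent y) hy1 hy2
    have hn : boxContent y = p + ((boxContent y - p).toNat : ℤ) := by omega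
    have hmx := main (boxContent y - p).toNat x hx y hy (by omega) hn (by omega)
    show (y.1 + (bs.1 - y0.1), y.2 + (bs.1 - y0.1)) ∈ θ
    rw [← htdef, ← hmx]
    exact hx
end
end

section
/- Let Π and Π′ be two outside decompositions of an edgewise connected skew diagram λ/μ. If for every content c the boxes of the diagonal of content c of λ/μ go up in Π if and only if they go up in Π′, then Π = Π′; that is, an outside decomposition is uniquely determined by the directions of the diagonals of λ/μ. -/
noncomputable section

/-! Skew shapes and border strips are order-convex in `ℤ × ℤ`. So a strip never contains two
consecutive boxes `(i, j)`, `(i + 1, j + 1)` of a diagonal, and when both lie in the skew shape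
so does `(i, j + 1)`; that box cannot start an outside strip, so it lies in the strip of exactly
one of its left and lower neighbours, which means that `(i, j)` and `(i + 1, j + 1)` go in the
same direction. Hence whole diagonals go in one direction. The direction of a box decides
whether it shares a strip with its upper and with its right neighbour, so the directions
determine which adjacent boxes share a strip, and as strips are edgewise connected this
determines the strips. -/

section ConnectedPartition

variable {α : Type*}

def SameBlock (P : Set (Set α)) (a b : α) : Prop := ∃ θ ∈ P, a ∈ θ ∧ b ∈ θ

theorem SameBlock.symm {P : Set (Set α)} {a b : α} (h : SameBlock P a b) : SameBlock P b a :=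
  let ⟨θ, hθ, ha, hb⟩ := h
  ⟨θ, hθ, hb, ha⟩

def IsConnectedPartition (r : α → α → Prop) (D : Set α) (P : Set (Set α)) : Prop :=
  (∀ θ ∈ P, θ.Nonempty ∧ θ ⊆ D ∧
    ∀ a ∈ θ, ∀ b ∈ θ, Relation.ReflTransGen (fun x y => x ∈ θ ∧ y ∈ θ ∧ r x y) a b) ∧
  ∀ b ∈ D, ∃! θ, θ ∈ P ∧ b ∈ θ

namespace IsConnectedPartition

variable {r : α → α → Prop} {D : Set α} {P P' : Set (Set α)}

theorem eq_of_mem_of_mem (hP : IsConnectedPartition r D P) {θ σ : Set α} (hθ : θ ∈ P)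
    (hσ : σ ∈ P) {a : α} (haθ : a ∈ θ) (haσ : a ∈ σ) : θ = σ :=
  (hP.2 a ((hP.1 θ hθ).2.1 haθ)).unique ⟨hθ, haθ⟩ ⟨hσ, haσ⟩

theorem sameBlock_iff_mem (hP : IsConnectedPartition r D P) {θ : Set α} (hθ : θ ∈ P)
    {a b : α} (hb : b ∈ θ) : SameBlock P a b ↔ a ∈ θ :=
  ⟨fun ⟨_, hσ, haσ, hbσ⟩ => hP.eq_of_mem_of_mem hσ hθ hbσ hb ▸ haσ, fun ha => ⟨θ, hθ, ha, hb⟩⟩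

theorem block_subset (hP : IsConnectedPartition r D P) (hP' : IsConnectedPartition r D P')
    (hsame : ∀ x ∈ D, ∀ y ∈ D, r x y → SameBlock P x y → SameBlock P' x y)
    {θ θ' : Set α} (hθ : θ ∈ P) (hθ' : θ' ∈ P') {a : α} (haθ : a ∈ θ) (haθ' : a ∈ θ') :
    θ ⊆ θ' := by
  obtain ⟨-, hθD, hθconn⟩ := hP.1 θ hθ
  intro b hb
  induction hθconn a haθ b hb with
  | refl => exact haθ'
  | tail _ hzw ih =>
    obtain ⟨hz, hw, hrzw⟩ := hzw
    obtain ⟨σ, hσ, hzσ, hwσ⟩ := hsame _ (hθD hz) _ (hθD hw) hrzw ⟨θ, hθ, hz, hw⟩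
    exact hP'.eq_of_mem_of_mem hσ hθ' hzσ (ih hz) ▸ hwσ

theorem subset_of_sameBlock_iff (hP : IsConnectedPartition r D P)
    (hP' : IsConnectedPartition r D P')
    (hsame : ∀ x ∈ D, ∀ y ∈ D, r x y → (SameBlock P x y ↔ SameBlock P' x y)) : P ⊆ P' := by
  intro θ hθ
  obtain ⟨⟨a, haθ⟩, hθD, -⟩ := hP.1 θ hθ
  obtain ⟨θ', ⟨hθ', haθ'⟩, -⟩ := hP'.2 a (hθD haθ)
  have hθθ' : θ ⊆ θ' :=
    hP.block_subset hP' (fun x hx y hy hr => (hsame x hx y hy hr).1) hθ hθ' haθ haθ'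
  have hθ'θ : θ' ⊆ θ :=
    hP'.block_subset hP (fun x hx y hy hr => (hsame x hx y hy hr).2) hθ' hθ haθ' haθ
  exact hθθ'.antisymm hθ'θ ▸ hθ'

theorem eq_of_sameBlock_iff (hP : IsConnectedPartition r D P)
    (hP' : IsConnectedPartition r D P')
    (hsame : ∀ x ∈ D, ∀ y ∈ D, r x y → (SameBlock P x y ↔ SameBlock P' x y)) : P = P' :=
  (hP.subset_of_sameBlock_iff hP' hsame).antisymm
    (hP'.subset_of_sameBlock_iff hP fun x hx y hy hr => (hsame x hx y hy hr).symm)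

end IsConnectedPartition

end ConnectedPartition

theorem IsSkewShape.ordConnected {D : Set Box} (hD : IsSkewShape D) : D.OrdConnected := by
  obtain ⟨lam, mu, -, rfl⟩ := hD
  refine ⟨fun x ⟨hx1, hxmu, _⟩ y ⟨_, _, hylam⟩ z ⟨⟨hxz1, hxz2⟩, ⟨hzy1, hzy2⟩⟩ => ?_⟩
  have hmu : mu.part z.1.toNat ≤ mu.part x.1.toNat := mu.antitone (by omega)
  have hlam : lam.part y.1.toNat ≤ lam.part z.1.toNat := lam.antitone (by omega)
  exact ⟨by omega, by omega, by omega⟩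

theorem IsSkewLike.ordConnected {S : Set Box} (hS : IsSkewLike S) : S.OrdConnected := by
  obtain ⟨v, hv⟩ := hS
  have hpre : (· + v) ⁻¹' boxTranslate v S = S :=
    Set.preimage_image_eq S (add_left_injective v)
  exact hpre ▸ hv.ordConnected.preimage_mono (monotone_id.add_const v)

theorem IsBorderStrip.add_one_one_notMem {B : Set Box} (hB : IsBorderStrip B) {b : Box}
    (hb : b ∈ B) : b + (1, 1) ∉ B := by
  intro hb'
  have hIcc : Set.Icc b (b + (1, 1)) ⊆ B := hB.2.1.ordConnected.out hb hb'
  refine hB.2.2.2 b ⟨hb, hIcc ?_, hIcc ?_, hb'⟩ <;>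
    simp [Set.mem_Icc, Prod.le_def]

theorem Set.OrdConnected.iff_of_boxContent_eq {D : Set Box} (hD : D.OrdConnected)
    {Q : Box → Prop}
    (hstep : ∀ i j : ℤ, (i, j) ∈ D → (i + 1, j + 1) ∈ D → (Q (i, j) ↔ Q (i + 1, j + 1)))
    {b b' : Box} (hb : b ∈ D) (hb' : b' ∈ D) (hc : boxContent b = boxContent b') :
    Q b ↔ Q b' := by
  have hdiag : ∀ (k : ℕ) (i j : ℤ), (i, j) ∈ D → (i + k, j + k) ∈ D →
      (Q (i, j) ↔ Q (i + k, j + k)) := by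
    intro k
    induction k with
    | zero => simp
    | succ k ih =>
      intro i j h0 hk
      push_cast at hk ⊢
      have hmid : (i + k, j + k) ∈ D :=
        hD.out h0 hk ⟨by simp [Prod.le_def], by simp [Prod.le_def]⟩
      rw [← add_assoc, ← add_assoc] at hk ⊢
      exact (ih i j h0 hmid).trans (hstep _ _ hmid hk)
  wlog hle : b.1 ≤ b'.1 generalizing b b'
  · exact (this hb' hb hc.symm (by omega)).symm
  obtain ⟨i, j⟩ := b
  obtain ⟨i', j'⟩ := b'
  obtain ⟨k, hk⟩ := Int.eq_ofNat_of_zero_le (sub_nonneg.2 hle)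
  have hb'k : ((i', j') : Box) = (i + k, j + k) := by
    simp only [boxContent] at hc hk
    ext <;> simp <;> omega
  rw [hb'k] at hb' ⊢
  exact hdiag k i j hb hb'

theorem goesUp_iff_sameBlock {D : Set Box} {P : Set (Set Box)} {b : Box}
    (hup : (b.1 - 1, b.2) ∈ D) : GoesUp D P b ↔ SameBlock P b (b.1 - 1, b.2) := by
  constructor
  · rintro ⟨θ, hθ, hbθ, hupθ | ⟨-, hupD⟩⟩
    · exact ⟨θ, hθ, hbθ, hupθ⟩
    · exact absurd hup hupD
  · rintro ⟨θ, hθ, hbθ, hupθ⟩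
    exact ⟨θ, hθ, hbθ, Or.inl hupθ⟩

namespace IsOutsideDecomposition

variable {D : Set Box} {P : Set (Set Box)}

theorem isConnectedPartition (hP : IsOutsideDecomposition D P) :
    IsConnectedPartition boxAdj D P :=
  ⟨fun θ hθ => ⟨(hP.1 θ hθ).1.1, (hP.1 θ hθ).2, (hP.1 θ hθ).1.2.2.1⟩, hP.2.1⟩

theorem goesRight_iff_sameBlock (hP : IsOutsideDecomposition D P) {b : Box}
    (hright : (b.1, b.2 + 1) ∈ D) : GoesRight D P b ↔ SameBlock P b (b.1, b.2 + 1) := by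
  constructor
  · rintro ⟨θ, hθ, hbθ, hrightθ | ⟨hend, hupD⟩⟩
    · exact ⟨θ, hθ, hbθ, hrightθ⟩
    · exact ((hP.2.2.2 θ hθ b hend).resolve_left (not_not.2 hupD) hright).elim
  · rintro ⟨θ, hθ, hbθ, hrightθ⟩
    exact ⟨θ, hθ, hbθ, Or.inl hrightθ⟩

theorem goesRight_iff_not_goesUp (hP : IsOutsideDecomposition D P) {b : Box} (hb : b ∈ D) :
    GoesRight D P b ↔ ¬GoesUp D P b := by
  constructor
  · rintro ⟨σ, hσ, hbσ, hright⟩ ⟨θ, hθ, hbθ, hup⟩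
    obtain rfl := hP.isConnectedPartition.eq_of_mem_of_mem hθ hσ hbθ hbσ
    rcases hup with hupθ | ⟨hend, hupD⟩ <;> rcases hright with hrightθ | ⟨hend', hupD'⟩
    · exact (hP.1 θ hθ).1.add_one_one_notMem hupθ (by simpa using hrightθ)
    · exact hend'.2.1 hupθ
    · exact hend.2.2 hrightθ
    · exact hupD hupD'
  · intro hnup
    obtain ⟨θ, ⟨hθ, hbθ⟩, -⟩ := hP.2.1 b hb
    have hupθ : (b.1 - 1, b.2) ∉ θ := fun h => hnup ⟨θ, hθ, hbθ, Or.inl h⟩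
    by_cases hrightθ : (b.1, b.2 + 1) ∈ θ
    · exact ⟨θ, hθ, hbθ, Or.inl hrightθ⟩
    have hend : IsEndBox θ b := ⟨hbθ, hupθ, hrightθ⟩
    by_cases hupD : (b.1 - 1, b.2) ∈ D
    · exact ⟨θ, hθ, hbθ, Or.inr ⟨hend, hupD⟩⟩
    · exact (hnup ⟨θ, hθ, hbθ, Or.inr ⟨hend, hupD⟩⟩).elim

theorem goesUp_iff_goesUp_add_one_one (hP : IsOutsideDecomposition D P) (hD : D.OrdConnected)
    {i j : ℤ} (hx : (i, j) ∈ D) (hy : (i + 1, j + 1) ∈ D) :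
    GoesUp D P (i, j) ↔ GoesUp D P (i + 1, j + 1) := by
  have hu : (i, j + 1) ∈ D := hD.out hx hy ⟨by simp [Prod.le_def], by simp [Prod.le_def]⟩
  obtain ⟨θ, ⟨hθ, huθ⟩, -⟩ := hP.2.1 _ hu
  rw [← not_iff_not, ← hP.goesRight_iff_not_goesUp hx, hP.goesRight_iff_sameBlock hu,
    goesUp_iff_sameBlock (by simpa using hu), add_sub_cancel_right,
    hP.isConnectedPartition.sameBlock_iff_mem hθ huθ,
    hP.isConnectedPartition.sameBlock_iff_mem hθ huθ]
  constructor
  · intro hxθ hyθ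
    exact (hP.1 θ hθ).1.add_one_one_notMem hxθ hyθ
  · intro hyθ
    by_contra hxθ
    have hstart : IsStartBox θ (i, j + 1) := ⟨huθ, by simpa using hxθ, hyθ⟩
    rcases hP.2.2.1 θ hθ _ hstart with hxD | hyD
    · exact hxD (by simpa using hx)
    · exact hyD hy

theorem goesUp_iff_forall_boxContent_eq (hP : IsOutsideDecomposition D P)
    (hD : D.OrdConnected) {b : Box} (hb : b ∈ D) :
    GoesUp D P b ↔ ∀ b' ∈ D, boxContent b' = boxContent b → GoesUp D P b' :=
  ⟨fun hup _ hb' hc =>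
    (hD.iff_of_boxContent_eq (fun _ _ => hP.goesUp_iff_goesUp_add_one_one hD) hb hb' hc.symm).1
      hup,
    fun h => h b hb rfl⟩

theorem sameBlock_iff_of_goesUp_iff {P' : Set (Set Box)} (hP : IsOutsideDecomposition D P)
    (hP' : IsOutsideDecomposition D P') (hdir : ∀ b ∈ D, GoesUp D P b ↔ GoesUp D P' b)
    {x y : Box} (hx : x ∈ D) (hy : y ∈ D) (hxy : boxAdj x y) :
    SameBlock P x y ↔ SameBlock P' x y := by
  have hup : ∀ b ∈ D, (b.1 - 1, b.2) ∈ D →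
      (SameBlock P b (b.1 - 1, b.2) ↔ SameBlock P' b (b.1 - 1, b.2)) := fun b hb hupD => by
    rw [← goesUp_iff_sameBlock hupD, ← goesUp_iff_sameBlock hupD, hdir b hb]
  have hright : ∀ b ∈ D, (b.1, b.2 + 1) ∈ D →
      (SameBlock P b (b.1, b.2 + 1) ↔ SameBlock P' b (b.1, b.2 + 1)) := fun b hb hrightD => by
    rw [← hP.goesRight_iff_sameBlock hrightD, ← hP'.goesRight_iff_sameBlock hrightD,
      hP.goesRight_iff_not_goesUp hb, hP'.goesRight_iff_not_goesUp hb, hdir b hb]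
  have hcomm : ∀ {Q : Set (Set Box)}, SameBlock Q y x ↔ SameBlock Q x y :=
    ⟨SameBlock.symm, SameBlock.symm⟩
  obtain ⟨x1, x2⟩ := x
  obtain ⟨y1, y2⟩ := y
  dsimp only [boxAdj] at hxy
  rcases hxy with ⟨rfl, rfl | rfl⟩ | ⟨rfl, rfl | rfl⟩
  · rw [← hcomm, ← hcomm]; exact hright _ hy hx
  · exact hright _ hx hy
  · simpa using hup _ hx (by simpa using hy)
  · rw [← hcomm, ← hcomm]; simpa using hup _ hy (by simpa using hx)

end IsOutsideDecomposition

theorem outsideDecomposition_determined_by_directions_general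
    (D : Set Box) (hD : IsSkewShape D)
    (P P' : Set (Set Box))
    (hP : IsOutsideDecomposition D P) (hP' : IsOutsideDecomposition D P')
    (h : ∀ c : ℤ, ((∀ b ∈ D, boxContent b = c → GoesUp D P b) ↔
        (∀ b ∈ D, boxContent b = c → GoesUp D P' b))) :
    P = P' := by
  have hdir : ∀ b ∈ D, GoesUp D P b ↔ GoesUp D P' b := fun b hb =>
    (hP.goesUp_iff_forall_boxContent_eq hD.ordConnected hb).trans
      ((h _).trans (hP'.goesUp_iff_forall_boxContent_eq hD.ordConnected hb).symm)
  exact hP.isConnectedPartition.eq_of_sameBlock_iff hP'.isConnectedPartition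
    fun x hx y hy hxy => hP.sameBlock_iff_of_goesUp_iff hP' hdir hx hy hxy

/-- An outside decomposition of an edgewise connected skew diagram is
uniquely determined by the directions (up versus right) of the diagonals. -/
theorem outsideDecomposition_determined_by_directions
    (D : Set Box) (hD : IsSkewShape D) (hne : D.Nonempty) (hconn : EdgewiseConnected D)
    (P P' : Set (Set Box))
    (hP : IsOutsideDecomposition D P) (hP' : IsOutsideDecomposition D P')
    (h : ∀ c : ℤ, ((∀ b ∈ D, boxContent b = c → GoesUp D P b) ↔
        (∀ b ∈ D, boxContent b = c → GoesUp D P' b))) :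
    P = P' :=
  outsideDecomposition_determined_by_directions_general D hD P P' hP hP' h
end
end
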